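/- Fix an imaginary quadratic field E ⊆ ℂ and an integer d ≥ 1. Then the set of subfields L of ℂ with [L : E] = d such that L = L_ψ for some nonzero ideal m of O_E, some integer ℓ ≥ 1, and some Grössencharacter ψ of E of modulus m and weight ℓ, is a finite set. -/

import Mathlib

noncomputable section

open NumberField IntermediateField
open scoped nonZeroDivisors

/-- `E` is an imaginary quadratic subfield of `ℂ`: `[E : ℚ] = 2` and `E ⊄ ℝ`. -/
def IsImagQuad (E : IntermediateField ℚ ℂ) : Prop :=
  Module.finrank ℚ E = 2 ∧ ∃ z : E, (z : ℂ).im ≠ 0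

variable (E : IntermediateField ℚ ℂ)

/-- A fractional ideal `J` of `E` is coprime to the modulus `m` if it is a quotient `a/b` of
integral ideals `a`, `b` each coprime to `m`. -/
def FracCoprime (m : Ideal (𝓞 E)) (J : FractionalIdeal (𝓞 E)⁰ E) : Prop :=
  ∃ a b : Ideal (𝓞 E), IsCoprime a m ∧ IsCoprime b m ∧
    J * (b : FractionalIdeal (𝓞 E)⁰ E) = (a : FractionalIdeal (𝓞 E)⁰ E)

/-- A Grössencharacter of `E` of modulus `m` and weight `ℓ`: a homomorphism from the group of
fractional ideals of `E` coprime to `m` to `ℂˣ` such that `ψ(αO_E) = α ^ ℓ` whenever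
`α O_E` is coprime to `m` and `α ≡ 1 mod m`.  (The function is recorded on all fractional
ideals; only its values on those coprime to `m` are constrained or ever used.) -/
structure Grossenchar (m : Ideal (𝓞 E)) (ℓ : ℕ) where
  toFun : FractionalIdeal (𝓞 E)⁰ E → ℂ
  map_one' : toFun 1 = 1
  ne_zero' : ∀ J, FracCoprime E m J → toFun J ≠ 0
  map_mul' : ∀ J J', FracCoprime E m J → FracCoprime E m J' →
    toFun (J * J') = toFun J * toFun J'
  princ' : ∀ α : 𝓞 E, IsCoprime (Ideal.span {α}) m → α - 1 ∈ m →
    toFun ((Ideal.span {α} : Ideal (𝓞 E)) : FractionalIdeal (𝓞 E)⁰ E) = ((α : E) : ℂ) ^ ℓ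

namespace Grossenchar

variable {E} {m : Ideal (𝓞 E)} {ℓ : ℕ}

/-- The value field of a Grössencharacter: the subfield of `ℂ` generated by the image of `ψ`
(i.e. by its values on the fractional ideals coprime to the modulus). -/
def valueField (ψ : Grossenchar E m ℓ) : IntermediateField ℚ ℂ :=
  IntermediateField.adjoin ℚ (ψ.toFun '' {J | FracCoprime E m J})

end Grossenchar

/-- Condition (★): the modulus character of `ψ` restricts on `ℤ` to the quadratic character
attached to `E`; concretely, for every rational prime `p ∤ Δ_E` with `pO_E` coprime to `m`,
`ψ(pO_E) = p^ℓ` if `p` is split in `E` and `ψ(pO_E) = -p^ℓ` if `p` is inert in `E`. -/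
def Grossenchar.Star {E : IntermediateField ℚ ℂ} [NumberField E] {m : Ideal (𝓞 E)} {ℓ : ℕ}
    (ψ : Grossenchar E m ℓ) : Prop :=
  ∀ p : ℕ, p.Prime → ¬ ((p : ℤ) ∣ NumberField.discr E) →
    IsCoprime (Ideal.span {(p : 𝓞 E)}) m →
    ((∃ P Q : Ideal (𝓞 E), P.IsPrime ∧ Q.IsPrime ∧ P ≠ Q ∧
        Ideal.span {(p : 𝓞 E)} = P * Q) →
      ψ.toFun ((Ideal.span {(p : 𝓞 E)} : Ideal (𝓞 E)) : FractionalIdeal (𝓞 E)⁰ E)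
        = (p : ℂ) ^ ℓ) ∧
    ((Ideal.span {(p : 𝓞 E)}).IsPrime →
      ψ.toFun ((Ideal.span {(p : 𝓞 E)} : Ideal (𝓞 E)) : FractionalIdeal (𝓞 E)⁰ E)
        = -((p : ℂ) ^ ℓ))

/-- The modulus character of `ψ` is quadratic: `ψ(αO_E)² = α^{2ℓ}` for all `α ∈ O_E` with
`αO_E` coprime to `m`. -/
def Grossenchar.QuadModChar {E : IntermediateField ℚ ℂ} {m : Ideal (𝓞 E)} {ℓ : ℕ}
    (ψ : Grossenchar E m ℓ) : Prop :=
  ∀ α : 𝓞 E, IsCoprime (Ideal.span {α}) m →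
    ψ.toFun ((Ideal.span {α} : Ideal (𝓞 E)) : FractionalIdeal (𝓞 E)⁰ E) ^ 2
      = ((α : E) : ℂ) ^ (2 * ℓ)

/-- `r` is the order of the modulus character of `ψ`: the least `r ≥ 1` such that
`ψ(αO_E)^r = α^{rℓ}` for all `α ∈ O_E` with `αO_E` coprime to `m`. -/
def Grossenchar.ModCharOrder {E : IntermediateField ℚ ℂ} {m : Ideal (𝓞 E)} {ℓ : ℕ}
    (ψ : Grossenchar E m ℓ) (r : ℕ) : Prop :=
  1 ≤ r ∧
  (∀ α : 𝓞 E, IsCoprime (Ideal.span {α}) m →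
    ψ.toFun ((Ideal.span {α} : Ideal (𝓞 E)) : FractionalIdeal (𝓞 E)⁰ E) ^ r
      = ((α : E) : ℂ) ^ (r * ℓ)) ∧
  ∀ r' : ℕ, 1 ≤ r' →
    (∀ α : 𝓞 E, IsCoprime (Ideal.span {α}) m →
      ψ.toFun ((Ideal.span {α} : Ideal (𝓞 E)) : FractionalIdeal (𝓞 E)⁰ E) ^ r'
        = ((α : E) : ℂ) ^ (r' * ℓ)) → r ≤ r'

/-- The ideal `𝔡_E`: `𝔇` if `Δ_E` is odd, `𝔭₂𝔇` if `Δ_E ≡ 4 (mod 8)`, and `2𝔇` if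
`Δ_E ≡ 0 (mod 8)`, where `𝔇 = differentIdeal ℤ (𝓞 E)` and `𝔭₂` is the unique prime above `2`
(obtained as the radical of `2𝓞 E`, since `2` ramifies when `Δ_E` is even). -/
def dIdeal (E : IntermediateField ℚ ℂ) [NumberField E] : Ideal (𝓞 E) :=
  if ¬ (2 ∣ NumberField.discr E) then differentIdeal ℤ (𝓞 E)
  else if NumberField.discr E % 8 = 4 then
    (Ideal.span {(2 : 𝓞 E)}).radical * differentIdeal ℤ (𝓞 E)
  else Ideal.span {(2 : 𝓞 E)} * differentIdeal ℤ (𝓞 E)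

/-- `ψ` is primitive: its defining property does not factor through any proper divisor of the
modulus. -/
def Grossenchar.Primitive {E : IntermediateField ℚ ℂ} {m : Ideal (𝓞 E)} {ℓ : ℕ}
    (ψ : Grossenchar E m ℓ) : Prop :=
  ¬ ∃ m' : Ideal (𝓞 E), m' ∣ m ∧ m' ≠ m ∧
    ∀ α : 𝓞 E, IsCoprime (Ideal.span {α}) m → α - 1 ∈ m' →
      ψ.toFun ((Ideal.span {α} : Ideal (𝓞 E)) : FractionalIdeal (𝓞 E)⁰ E) = ((α : E) : ℂ) ^ ℓ

set_option maxHeartbeats 1000000 in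
set_option synthInstance.maxHeartbeats 400000 in
theorem _stmt5_warm {E : IntermediateField ℚ ℂ} (J K : FractionalIdeal (𝓞 E)⁰ E) : J * K = K * J := mul_comm _ _

set_option maxHeartbeats 1000000
set_option synthInstance.maxHeartbeats 400000

namespace Stmt5Aux

theorem pp_odd_bound (p k : ℕ) (hp : Nat.Prime p) (hk : 0 < k) (hpodd : Odd p) :
    p ^ k ≤ (p ^ k).totient ^ 2 := by
  have hφ : (p ^ k).totient = p ^ (k - 1) * (p - 1) := Nat.totient_prime_pow hp hk
  have hp3 : 3 ≤ p := by
    rcases hpodd with ⟨j, hj⟩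
    have := hp.two_le
    omega
  obtain ⟨q, rfl⟩ : ∃ q, p = q + 3 := ⟨p - 3, by omega⟩
  have key : q + 3 ≤ (q + 3 - 1) ^ 2 := by
    have : q + 3 - 1 = q + 2 := by omega
    rw [this]
    nlinarith
  have h1 : (q + 3) ^ k = (q + 3) ^ (k - 1) * (q + 3) := by
    conv_lhs => rw [show k = (k - 1) + 1 by omega, pow_succ]
  rw [hφ, mul_pow, h1]
  calc (q+3) ^ (k - 1) * (q+3) ≤ (q+3) ^ (k - 1) * (q + 3 - 1) ^ 2 :=
        Nat.mul_le_mul_left _ key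
    _ ≤ ((q+3) ^ (k - 1)) ^ 2 * (q + 3 - 1) ^ 2 :=
        Nat.mul_le_mul_right _ (Nat.le_self_pow (by norm_num) _)

theorem totient_bound : ∀ n : ℕ, (Odd n → n ≤ n.totient ^ 2) ∧ n ≤ 2 * n.totient ^ 2 := by
  intro n
  induction n using Nat.recOnPosPrimePosCoprime with
  | zero => simp [Nat.odd_iff]
  | one => simp
  | prime_pow p k hp hk =>
      constructor
      · intro hodd
        have hpodd : Odd p := by
          rcases Nat.Prime.eq_two_or_odd' hp with h2 | h
          · exfalso
            subst h2
            have hev : Even (2 ^ k) := (Nat.even_pow).mpr ⟨by norm_num, hk.ne'⟩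
            exact (Nat.not_odd_iff_even.mpr hev) hodd
          · exact h
        exact pp_odd_bound p k hp hk hpodd
      · rcases Nat.Prime.eq_two_or_odd' hp with h2 | hpodd
        · subst h2
          have hφ : (2 ^ k).totient = 2 ^ (k - 1) * (2 - 1) := Nat.totient_prime_pow hp hk
          rw [hφ]
          have : 2 ^ k ≤ 2 * (2 ^ (k - 1)) ^ 2 := by
            rw [← pow_mul, show 2 * 2 ^ ((k-1)*2) = 2 ^ ((k-1)*2 + 1) by ring]
            exact Nat.pow_le_pow_right (by norm_num) (by omega)
          simpa using this
        · have := pp_odd_bound p k hp hk hpodd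
          omega
  | coprime a b ha hb hcop Pa Pb =>
      have hφ : (a * b).totient = a.totient * b.totient := Nat.totient_mul hcop
      have hodd : Odd (a * b) → a * b ≤ (a*b).totient ^ 2 := by
        intro h
        rw [Nat.odd_mul] at h
        rw [hφ, mul_pow]
        exact Nat.mul_le_mul (Pa.1 h.1) (Pb.1 h.2)
      refine ⟨hodd, ?_⟩
      by_cases hao : Odd a
      · by_cases hbo : Odd b
        · have := hodd (Nat.odd_mul.mpr ⟨hao, hbo⟩)
          omega
        · -- b even, a odd
          have : a * b ≤ a.totient ^ 2 * (2 * b.totient ^ 2) :=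
            Nat.mul_le_mul (Pa.1 hao) Pb.2
          rw [hφ, mul_pow]
          calc a * b ≤ a.totient ^ 2 * (2 * b.totient ^ 2) := this
            _ = 2 * (a.totient ^ 2 * b.totient ^ 2) := by ring
      · -- a even hence b odd (coprime)
        have hbo : Odd b := by
          rw [Nat.odd_iff] at hao ⊢
          rcases Nat.even_or_odd b with hb2 | hb2
          · exfalso
            have h2a : 2 ∣ a := by omega
            have h2b : 2 ∣ b := hb2.two_dvd
            have h2g : 2 ∣ Nat.gcd a b := Nat.dvd_gcd h2a h2b
            rw [Nat.Coprime] at hcop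
            omega
          · rwa [Nat.odd_iff] at hb2
        have : a * b ≤ (2 * a.totient ^ 2) * b.totient ^ 2 :=
          Nat.mul_le_mul Pa.2 (Pb.1 hbo)
        rw [hφ, mul_pow]
        calc a * b ≤ 2 * a.totient ^ 2 * b.totient ^ 2 := this
          _ = 2 * (a.totient ^ 2 * b.totient ^ 2) := by ring


variable {E : IntermediateField ℚ ℂ} {m : Ideal (𝓞 E)} {ℓ : ℕ} {α : 𝓞 E}

theorem gamma_split {K : Type*} [Field K] (Ga Gb xa xb : K) (h : ℕ) :
    (Ga / xa ^ h) / (Gb / xb ^ h) = (Ga / Gb) * (xb / xa) ^ h := by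
  rw [div_div_div_comm, div_div_eq_mul_div, div_pow, mul_div_assoc]

theorem pow_split {K : Type*} [Field K] (Gr τ : K) (h q s : ℕ) :
    (Gr * τ ^ h) ^ (h * q + s) = ((τ ^ (h * q + s)) * Gr ^ q) ^ h * Gr ^ s := by
  ring

theorem frac_one : FracCoprime E m 1 := by
  refine ⟨⊤, ⊤, ?_, ?_, by simp⟩ <;>
  · rw [← Ideal.one_eq_top]; exact isCoprime_one_left

theorem frac_mul {J J' : FractionalIdeal (𝓞 E)⁰ E} (h : FracCoprime E m J)
    (h' : FracCoprime E m J') : FracCoprime E m (J * J') := by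
  obtain ⟨a, b, ha, hb, hab⟩ := h
  obtain ⟨a', b', ha', hb', hab'⟩ := h'
  refine ⟨a * a', b * b', ha.mul_left ha', hb.mul_left hb', ?_⟩
  rw [FractionalIdeal.coeIdeal_mul, FractionalIdeal.coeIdeal_mul]
  rw [show J * J' * (↑b * ↑b') = (J * ↑b) * (J' * ↑b') by ring, hab, hab']

theorem frac_pow {J : FractionalIdeal (𝓞 E)⁰ E} (h : FracCoprime E m J) (n : ℕ) :
    FracCoprime E m (J ^ n) := by
  induction n with
  | zero => simpa using frac_one
  | succ n ih => rw [pow_succ]; exact frac_mul ih h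

theorem frac_coe {a : Ideal (𝓞 E)} (ha : IsCoprime a m) :
    FracCoprime E m (a : FractionalIdeal (𝓞 E)⁰ E) := by
  refine ⟨a, ⊤, ha, ?_, by simp⟩
  rw [← Ideal.one_eq_top]; exact isCoprime_one_left

theorem psi_pow (ψ : Grossenchar E m ℓ) {J : FractionalIdeal (𝓞 E)⁰ E}
    (h : FracCoprime E m J) (n : ℕ) : ψ.toFun (J ^ n) = ψ.toFun J ^ n := by
  induction n with
  | zero => simpa using ψ.map_one'
  | succ n ih =>
      rw [pow_succ, ψ.map_mul' _ _ (frac_pow h n) h, ih, pow_succ]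

theorem m_ne_top (ψ : Grossenchar E m ℓ) (hℓ : 1 ≤ ℓ) : m ≠ ⊤ := by
  intro hm
  subst hm
  have hcop : ∀ a : Ideal (𝓞 E), IsCoprime a (⊤ : Ideal (𝓞 E)) := by
    intro a
    rw [← Ideal.one_eq_top]; exact isCoprime_one_right
  have h0 : FracCoprime E ⊤ 0 := ⟨⊥, ⊤, hcop _, hcop _, by simp⟩
  have h1 := ψ.ne_zero' 0 h0
  have h2 := ψ.princ' 0 (hcop _) (by simp)
  rw [Ideal.span_singleton_eq_bot.mpr rfl] at h2
  simp only [FractionalIdeal.coeIdeal_bot] at h2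
  apply h1
  rw [h2]
  simp only [ZeroMemClass.coe_zero, map_zero]
  exact zero_pow (by omega)

theorem ideal_ne_zero {a : Ideal (𝓞 E)} (ha : IsCoprime a m) (hm : m ≠ ⊤) : a ≠ 0 := by
  rintro rfl
  exact hm (Ideal.isUnit_iff.mp (isCoprime_zero_left.mp ha))

theorem unit_mod (hm : IsCoprime (Ideal.span {α}) m) :
    IsUnit (Ideal.Quotient.mk m α) := by
  obtain ⟨i, hi, j, hj, hij⟩ := Ideal.isCoprime_iff_exists.mp hm
  obtain ⟨c, hc⟩ := Ideal.mem_span_singleton'.mp hi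
  refine IsUnit.of_mul_eq_one (Ideal.Quotient.mk m c) ?_
  rw [← map_mul, mul_comm α c, hc]
  have hj0 : Ideal.Quotient.mk m j = 0 := Ideal.Quotient.eq_zero_iff_mem.mpr hj
  have h1 : Ideal.Quotient.mk m i + Ideal.Quotient.mk m j = 1 := by
    rw [← map_add, hij, map_one]
  rw [hj0, add_zero] at h1
  exact h1

theorem pow_card_sub_one_mem (hm : IsCoprime (Ideal.span {α}) m) :
    α ^ Nat.card ((𝓞 E ⧸ m)ˣ) - 1 ∈ m := by
  have hu := unit_mod hm
  have h1 : (Ideal.Quotient.mk m α) ^ Nat.card ((𝓞 E ⧸ m)ˣ) = 1 := by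
    have := pow_card_eq_one' (G := ((𝓞 E ⧸ m)ˣ)) (x := hu.unit)
    calc (Ideal.Quotient.mk m α) ^ Nat.card ((𝓞 E ⧸ m)ˣ)
        = ((hu.unit : (𝓞 E ⧸ m)ˣ) : (𝓞 E ⧸ m)) ^ Nat.card ((𝓞 E ⧸ m)ˣ) := by
          rw [IsUnit.unit_spec]
      _ = (((hu.unit ^ Nat.card ((𝓞 E ⧸ m)ˣ)) : (𝓞 E ⧸ m)ˣ) : (𝓞 E ⧸ m)) := by
          rw [Units.val_pow_eq_pow_val]
      _ = 1 := by rw [this]; rfl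
  rw [← map_pow] at h1
  rw [show (1 : 𝓞 E ⧸ m) = Ideal.Quotient.mk m 1 from (map_one _).symm] at h1
  exact (Ideal.Quotient.mk_eq_mk_iff_sub_mem _ _).mp h1

theorem key1 (ψ : Grossenchar E m ℓ) {α : 𝓞 E} (hm : IsCoprime (Ideal.span {α}) m) :
    ψ.toFun ((Ideal.span {α} : Ideal (𝓞 E)) : FractionalIdeal (𝓞 E)⁰ E) ^ Nat.card ((𝓞 E ⧸ m)ˣ)
      = ((α : E) : ℂ) ^ (Nat.card ((𝓞 E ⧸ m)ˣ) * ℓ) := by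
  set t := Nat.card ((𝓞 E ⧸ m)ˣ) with ht
  have hspan : Ideal.span {α ^ t} = Ideal.span {α} ^ t := (Ideal.span_singleton_pow α t).symm
  have hcopt : IsCoprime (Ideal.span {α ^ t}) m := by
    rw [hspan]; exact hm.pow_left
  have h := ψ.princ' (α ^ t) hcopt (pow_card_sub_one_mem hm)
  rw [hspan, FractionalIdeal.coeIdeal_pow, psi_pow ψ (frac_coe hm) t] at h
  rw [h]
  push_cast
  rw [← pow_mul]

end Stmt5Aux

open Stmt5Aux

set_option maxHeartbeats 2000000 in
/-- For a fixed imaginary quadratic field `E ⊆ ℂ` and `d ≥ 1`, only finitely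
many subfields `L` of `ℂ` with `[L : E] = d` arise as value fields of Grössencharacters of `E`
(for arbitrary nonzero moduli and weights `ℓ ≥ 1`). -/
theorem stmt_5 (E : IntermediateField ℚ ℂ) (hE : IsImagQuad E) (d : ℕ) (hd : 1 ≤ d) :
    {L : IntermediateField ℚ ℂ | E ≤ L ∧ IntermediateField.relfinrank E L = d ∧
      ∃ m : Ideal (𝓞 E), m ≠ 0 ∧ ∃ ℓ : ℕ, 1 ≤ ℓ ∧ ∃ ψ : Grossenchar E m ℓ,
        L = ψ.valueField}.Finite := by
  classical
  have hfd : FiniteDimensional ℚ E := Module.finite_of_finrank_pos (by rw [hE.1]; norm_num)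
  haveI : NumberField ↥E := ⟨⟩
  -- class group data
  set hcard := Fintype.card (ClassGroup (𝓞 E)) with hhcard
  have hcpos : 0 < hcard := Fintype.card_pos
  choose rep hrep using ClassGroup.mk0_surjective (R := 𝓞 E)
  have hgex : ∀ c : ClassGroup (𝓞 E),
      ∃ g : 𝓞 E, ((rep c : Ideal (𝓞 E)) ^ hcard : Ideal (𝓞 E)) = Ideal.span {g} := by
    intro c
    have h1 : ClassGroup.mk0 ((rep c) ^ hcard) = 1 := by
      rw [map_pow, hrep, pow_card_eq_one]
    have h2 : (((rep c) ^ hcard : (Ideal (𝓞 E))⁰) : Ideal (𝓞 E)).IsPrincipal := by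
      rw [← ClassGroup.mk0_eq_one_iff (((rep c) ^ hcard : (Ideal (𝓞 E))⁰)).2]
      exact h1
    obtain ⟨gc, hgc⟩ := h2.principal
    refine ⟨gc, ?_⟩
    rw [show ((rep c : Ideal (𝓞 E)) ^ hcard : Ideal (𝓞 E))
      = (((rep c) ^ hcard : (Ideal (𝓞 E))⁰) : Ideal (𝓞 E)) from rfl, hgc]
  choose g hg using hgex
  have hgne : ∀ c, (g c : 𝓞 E) ≠ 0 := by
    intro c hc
    have := hg c
    rw [hc, Ideal.span_singleton_eq_bot.mpr rfl] at this
    exact nonZeroDivisors.coe_ne_zero ((rep c) ^ hcard)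
      (by rw [show ((((rep c) ^ hcard : (Ideal (𝓞 E))⁰)) : Ideal (𝓞 E)) = (rep c : Ideal (𝓞 E)) ^ hcard from rfl, this]; rfl)
  -- numerical bound
  set N := 2 * (2 * d) ^ 2 with hN
  -- the finite generating set
  set T : Set ℂ := ⋃ (c : ClassGroup (𝓞 E)) (c' : ClassGroup (𝓞 E)) (s : Fin hcard),
      {z : ℂ | z ^ (hcard * N.factorial) =
        (((g c : E) : ℂ) / ((g c' : E) : ℂ)) ^ ((s : ℕ) * N.factorial)} with hT
  have hTfin : T.Finite := by
    refine Set.finite_iUnion fun c => Set.finite_iUnion fun c' => Set.finite_iUnion fun s => ?_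
    have hne : ((Polynomial.X : Polynomial ℂ) ^ (hcard * N.factorial) -
        Polynomial.C ((((g c : E) : ℂ) / ((g c' : E) : ℂ)) ^ ((s : ℕ) * N.factorial))) ≠ 0 :=
      Polynomial.X_pow_sub_C_ne_zero (by positivity) _
    refine (Polynomial.finite_setOf_isRoot hne).subset ?_
    intro z hz
    simp only [Set.mem_setOf_eq] at hz ⊢
    simp [Polynomial.IsRoot, sub_eq_zero, hz]
  have hTalg : ∀ x ∈ T, IsIntegral ℚ x := by
    intro x hx
    simp only [hT, Set.mem_iUnion, Set.mem_setOf_eq] at hx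
    obtain ⟨c, c', s, hxe⟩ := hx
    have hint : IsIntegral E x := by
      refine ⟨Polynomial.X ^ (hcard * N.factorial) -
        Polynomial.C (((g c : E) / ((g c' : E)) : E) ^ ((s : ℕ) * N.factorial)), Polynomial.monic_X_pow_sub_C _ (by positivity), ?_⟩
      simp only [Polynomial.eval₂_sub, Polynomial.eval₂_X_pow, Polynomial.eval₂_C]
      rw [sub_eq_zero, hxe]
      push_cast
      rfl
    exact isIntegral_trans x hint
  set M : IntermediateField ℚ ℂ := E ⊔ IntermediateField.adjoin ℚ T with hM
  haveI hMfd : FiniteDimensional ℚ M := by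
    haveI : Finite ↥T := hTfin.to_subtype
    haveI : FiniteDimensional ℚ (IntermediateField.adjoin ℚ T) :=
      IntermediateField.finiteDimensional_adjoin hTalg
    exact IntermediateField.finiteDimensional_sup E (IntermediateField.adjoin ℚ T)
  -- it suffices to show the set is contained in the subfields of M
  have hfinM : {L : IntermediateField ℚ ℂ | L ≤ M}.Finite := by
    haveI : Finite (IntermediateField ℚ M) :=
      Field.finite_intermediateField_of_exists_primitive_element ℚ M
        (Field.exists_primitive_element ℚ M)
    have himg : (Set.InjOn (fun L : IntermediateField ℚ ℂ => IntermediateField.comap M.val L)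
        {L | L ≤ M}) := by
      intro L1 h1 L2 h2 he
      have key : ∀ (L L' : IntermediateField ℚ ℂ), L ≤ M → L' ≤ M →
          IntermediateField.comap M.val L = IntermediateField.comap M.val L' → L ≤ L' := by
        intro L L' hL hL' hee
        intro x hxL
        have hxM : x ∈ M := hL hxL
        have hmem : (⟨x, hxM⟩ : M) ∈ IntermediateField.comap M.val L := hxL
        rw [hee] at hmem
        exact hmem
      exact le_antisymm (key _ _ h1 h2 he) (key _ _ h2 h1 he.symm)
    exact Set.Finite.of_finite_image ((@Set.finite_univ _ (by assumption)).subset (Set.subset_univ _)) himg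
  refine hfinM.subset ?_
  rintro L ⟨hEL, hrank, m, hm0, ℓ, hℓ, ψ, rfl⟩
  simp only [Set.mem_setOf_eq]
  -- L = ψ.valueField ≤ M
  rw [Grossenchar.valueField, IntermediateField.adjoin_le_iff]
  rintro x ⟨J, hJ, rfl⟩
  -- basic facts about the modulus
  have hmt : m ≠ ⊤ := m_ne_top ψ hℓ
  haveI : Fintype (𝓞 E ⧸ m) := @Fintype.ofFinite _ (Ideal.finiteQuotientOfFreeOfNeBot m hm0)
  set t := Nat.card ((𝓞 E ⧸ m)ˣ) with hts
  have htpos : 0 < t := Nat.card_pos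
  -- decompose J
  obtain ⟨a, b, ha, hb, hab⟩ := id hJ
  have haNZ : a ∈ (Ideal (𝓞 E))⁰ :=
    mem_nonZeroDivisors_iff_ne_zero.mpr (ideal_ne_zero ha hmt)
  have hbNZ : b ∈ (Ideal (𝓞 E))⁰ :=
    mem_nonZeroDivisors_iff_ne_zero.mpr (ideal_ne_zero hb hmt)
  set ca := ClassGroup.mk0 (⟨a, haNZ⟩ : (Ideal (𝓞 E))⁰) with hca
  set cb := ClassGroup.mk0 (⟨b, hbNZ⟩ : (Ideal (𝓞 E))⁰) with hcb
  obtain ⟨xa, hxane, hxa⟩ := (ClassGroup.mk0_eq_mk0_iff_exists_fraction_ring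
      (K := E)).mp (show ClassGroup.mk0 (⟨a, haNZ⟩ : (Ideal (𝓞 E))⁰) = ClassGroup.mk0 (rep ca)
        from by rw [hrep ca])
  obtain ⟨xb, hxbne, hxb⟩ := (ClassGroup.mk0_eq_mk0_iff_exists_fraction_ring
      (K := E)).mp (show ClassGroup.mk0 (⟨b, hbNZ⟩ : (Ideal (𝓞 E))⁰) = ClassGroup.mk0 (rep cb)
        from by rw [hrep cb])
  -- generators of a ^ hcard and b ^ hcard
  have hgen : ∀ (i : Ideal (𝓞 E)) (hi : i ∈ (Ideal (𝓞 E))⁰) (xi : E) (_ : xi ≠ 0)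
      (ci : ClassGroup (𝓞 E)),
      FractionalIdeal.spanSingleton (𝓞 E)⁰ xi * (⟨i, hi⟩ : (Ideal (𝓞 E))⁰) = rep ci →
      ∃ αi : 𝓞 E, Ideal.span {αi} = i ^ hcard ∧
        algebraMap (𝓞 E) E αi = (xi ^ hcard)⁻¹ * (g ci : E) := by
    intro i hi xi hxine ci hrel
    have h1 : FractionalIdeal.spanSingleton (𝓞 E)⁰ (xi ^ hcard) *
        ((i : FractionalIdeal (𝓞 E)⁰ E)) ^ hcard
        = FractionalIdeal.spanSingleton (𝓞 E)⁰ (algebraMap (𝓞 E) E (g ci)) := by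
      rw [← FractionalIdeal.coeIdeal_span_singleton, ← hg ci,
        FractionalIdeal.coeIdeal_pow, ← FractionalIdeal.spanSingleton_pow, ← mul_pow]
      exact congrArg (· ^ hcard) hrel
    have h2 : ((i ^ hcard : Ideal (𝓞 E)) : FractionalIdeal (𝓞 E)⁰ E)
        = FractionalIdeal.spanSingleton (𝓞 E)⁰ ((xi ^ hcard)⁻¹ * (g ci : E)) := by
      rw [FractionalIdeal.coeIdeal_pow]
      calc (i : FractionalIdeal (𝓞 E)⁰ E) ^ hcard
          = FractionalIdeal.spanSingleton (𝓞 E)⁰ ((xi ^ hcard)⁻¹) *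
            (FractionalIdeal.spanSingleton (𝓞 E)⁰ (xi ^ hcard) *
              (i : FractionalIdeal (𝓞 E)⁰ E) ^ hcard) := by
            rw [← mul_assoc, FractionalIdeal.spanSingleton_mul_spanSingleton,
              inv_mul_cancel₀ (pow_ne_zero _ hxine), FractionalIdeal.spanSingleton_one, one_mul]
        _ = FractionalIdeal.spanSingleton (𝓞 E)⁰ ((xi ^ hcard)⁻¹) *
            FractionalIdeal.spanSingleton (𝓞 E)⁰ (algebraMap (𝓞 E) E (g ci)) := by rw [h1]
        _ = FractionalIdeal.spanSingleton (𝓞 E)⁰ ((xi ^ hcard)⁻¹ * (g ci : E)) := by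
            rw [FractionalIdeal.spanSingleton_mul_spanSingleton]
    have hmem : (xi ^ hcard)⁻¹ * (g ci : E) ∈
        ((i ^ hcard : Ideal (𝓞 E)) : FractionalIdeal (𝓞 E)⁰ E) := by
      rw [h2]; exact FractionalIdeal.mem_spanSingleton_self _ _
    rw [FractionalIdeal.mem_coeIdeal] at hmem
    obtain ⟨αi, hα1, hα2⟩ := hmem
    refine ⟨αi, ?_, hα2⟩
    apply FractionalIdeal.coeIdeal_injective' (R := 𝓞 E) (P := E) (le_refl ((𝓞 E)⁰))
    show ((Ideal.span {αi} : Ideal (𝓞 E)) : FractionalIdeal (𝓞 E)⁰ E)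
      = ((i ^ hcard : Ideal (𝓞 E)) : FractionalIdeal (𝓞 E)⁰ E)
    rw [FractionalIdeal.coeIdeal_span_singleton, hα2, h2]
  obtain ⟨αa, hspan_a, hval_a⟩ := hgen a haNZ xa hxane ca hxa
  obtain ⟨αb, hspan_b, hval_b⟩ := hgen b hbNZ xb hxbne cb hxb
  -- the multiplicative relation
  have hmain : ψ.toFun J ^ hcard *
      ψ.toFun ((b ^ hcard : Ideal (𝓞 E)) : FractionalIdeal (𝓞 E)⁰ E)
      = ψ.toFun ((a ^ hcard : Ideal (𝓞 E)) : FractionalIdeal (𝓞 E)⁰ E) := by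
    have hpow : J ^ hcard * ((b ^ hcard : Ideal (𝓞 E)) : FractionalIdeal (𝓞 E)⁰ E)
        = ((a ^ hcard : Ideal (𝓞 E)) : FractionalIdeal (𝓞 E)⁰ E) := by
      rw [FractionalIdeal.coeIdeal_pow, FractionalIdeal.coeIdeal_pow, ← mul_pow, hab]
    rw [← psi_pow ψ hJ hcard,
      ← ψ.map_mul' _ _ (frac_pow hJ hcard) (frac_coe hb.pow_left), hpow]
  have hKa := key1 ψ (show IsCoprime (Ideal.span {αa}) m by rw [hspan_a]; exact ha.pow_left)
  have hKb := key1 ψ (show IsCoprime (Ideal.span {αb}) m by rw [hspan_b]; exact hb.pow_left)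
  rw [hspan_a, ← hts] at hKa
  rw [hspan_b, ← hts] at hKb
  -- complex numbers
  set X := ψ.toFun J with hX
  have hXne : X ≠ 0 := ψ.ne_zero' J hJ
  set A : ℂ := ((αa : E) : ℂ) with hA
  set Bv : ℂ := ((αb : E) : ℂ) with hB
  have haane : αa ≠ 0 := by
    intro h0
    rw [h0] at hspan_a
    have : (a : Ideal (𝓞 E)) ^ hcard ≠ 0 := pow_ne_zero _ (ideal_ne_zero ha hmt)
    rw [← hspan_a] at this
    simp at this
  have habne : αb ≠ 0 := by
    intro h0
    rw [h0] at hspan_b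
    have : (b : Ideal (𝓞 E)) ^ hcard ≠ 0 := pow_ne_zero _ (ideal_ne_zero hb hmt)
    rw [← hspan_b] at this
    simp at this
  have hAne : A ≠ 0 := by
    simp only [hA, ne_eq, ZeroMemClass.coe_eq_zero]
    exact_mod_cast haane
  have hBne : Bv ≠ 0 := by
    simp only [hB, ne_eq, ZeroMemClass.coe_eq_zero]
    exact_mod_cast habne
  have hXht : X ^ (hcard * t) * Bv ^ (t * ℓ) = A ^ (t * ℓ) := by
    have h7 := congrArg (· ^ t) hmain
    simp only [mul_pow] at h7
    rw [hKa, hKb] at h7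
    rw [pow_mul]
    exact h7
  set γ : ℂ := A / Bv with hγ
  set ρ : ℂ := X ^ hcard / γ ^ ℓ with hρ
  have hγne : γ ≠ 0 := div_ne_zero hAne hBne
  have hρt : ρ ^ t = 1 := by
    have hne : γ ^ ℓ ≠ 0 := pow_ne_zero _ hγne
    rw [hρ, div_pow, div_eq_one_iff_eq (pow_ne_zero t hne)]
    rw [← pow_mul, ← pow_mul, hγ, div_pow, mul_comm ℓ t]
    exact eq_div_of_mul_eq (pow_ne_zero _ hBne) hXht
  -- ρ lies in the value field and is a root of unity of bounded order
  have hXL : X ∈ ψ.valueField := IntermediateField.subset_adjoin _ _ ⟨J, hJ, rfl⟩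
  have hAL : A ∈ ψ.valueField := hEL (SetLike.coe_mem ((αa : E)))
  have hBL : Bv ∈ ψ.valueField := hEL (SetLike.coe_mem ((αb : E)))
  have hρL : ρ ∈ ψ.valueField :=
    div_mem (pow_mem hXL _) (pow_mem (div_mem hAL hBL) _)
  have hfr : Module.finrank ℚ (ψ.valueField) = 2 * d := by
    have h5 := IntermediateField.finrank_bot_mul_relfinrank hEL
    rw [hE.1, hrank] at h5
    exact h5.symm
  haveI hLfd : FiniteDimensional ℚ (ψ.valueField) :=
    Module.finite_of_finrank_pos (by rw [hfr]; omega)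
  have hfin : IsOfFinOrder ρ := isOfFinOrder_iff_pow_eq_one.mpr ⟨t, htpos, hρt⟩
  set n := orderOf ρ with hn
  have npos : 0 < n := hfin.orderOf_pos
  have hprim : IsPrimitiveRoot ρ n :=
    ⟨pow_orderOf_eq_one ρ, fun l hl => orderOf_dvd_of_pow_eq_one hl⟩
  set ρL : ψ.valueField := ⟨ρ, hρL⟩ with hρLdef
  have hprimL : IsPrimitiveRoot ρL n := by
    constructor
    · apply Subtype.ext
      push_cast
      exact hprim.pow_eq_one
    · intro l hl
      apply hprim.dvd_of_pow_eq_one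
      have := congrArg (Subtype.val) hl
      push_cast at this
      exact this
  have htot : Nat.totient n ≤ 2 * d := by
    have hI : Irreducible (Polynomial.cyclotomic (Nat.lcm n n) ℚ) := by
      rw [Nat.lcm_self]; exact Polynomial.cyclotomic.irreducible_rat npos
    have h8 := IsPrimitiveRoot.lcm_totient_le_finrank hprimL hprimL hI
    rwa [Nat.lcm_self, hfr] at h8
  have hnN : n ≤ N := by
    have h6 := (totient_bound n).2
    have h9 : Nat.totient n ^ 2 ≤ (2 * d) ^ 2 := Nat.pow_le_pow_left htot 2
    omega
  have hρN : ρ ^ N.factorial = 1 :=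
    orderOf_dvd_iff_pow_eq_one.mp (Nat.dvd_factorial npos hnN)
  -- final assembly
  set Gr : ℂ := ((g ca : E) : ℂ) / ((g cb : E) : ℂ) with hGr
  set τ : ℂ := ((xb : ℂ)) / ((xa : ℂ)) with hτ
  set θE : E := (xb / xa) ^ ℓ * ((g ca : E) / (g cb : E)) ^ (ℓ / hcard) with hθE
  have hθ : (θE : ℂ) = τ ^ ℓ * Gr ^ (ℓ / hcard) := by
    rw [hθE]
    push_cast
    rfl
  have hxane' : ((xa : ℂ)) ≠ 0 := by
    simpa [ZeroMemClass.coe_eq_zero] using hxane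
  have hxbne' : ((xb : ℂ)) ≠ 0 := by
    simpa [ZeroMemClass.coe_eq_zero] using hxbne
  have hGane : ((g ca : E) : ℂ) ≠ 0 := by
    simp only [ne_eq, ZeroMemClass.coe_eq_zero]
    exact_mod_cast hgne ca
  have hGbne : ((g cb : E) : ℂ) ≠ 0 := by
    simp only [ne_eq, ZeroMemClass.coe_eq_zero]
    exact_mod_cast hgne cb
  have hGrne : Gr ≠ 0 := div_ne_zero hGane hGbne
  have hτne : τ ≠ 0 := div_ne_zero hxbne' hxane'
  have hθne : (θE : ℂ) ≠ 0 := by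
    rw [hθ]
    exact mul_ne_zero (pow_ne_zero _ hτne) (pow_ne_zero _ hGrne)
  have hAval : ((xa : ℂ)) ^ hcard * A = ((g ca : E) : ℂ) := by
    have h10 : (xa ^ hcard) * (algebraMap (𝓞 E) E αa) = ((g ca : E)) := by
      rw [hval_a, ← mul_assoc, mul_inv_cancel₀ (pow_ne_zero _ hxane), one_mul]
    have h11 := congrArg (fun y : E => (y : ℂ)) h10
    push_cast at h11
    exact h11
  have hBval : ((xb : ℂ)) ^ hcard * Bv = ((g cb : E) : ℂ) := by
    have h10 : (xb ^ hcard) * (algebraMap (𝓞 E) E αb) = ((g cb : E)) := by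
      rw [hval_b, ← mul_assoc, mul_inv_cancel₀ (pow_ne_zero _ hxbne), one_mul]
    have h11 := congrArg (fun y : E => (y : ℂ)) h10
    push_cast at h11
    exact h11
  have hA' : A = ((g ca : E) : ℂ) / ((xa : ℂ)) ^ hcard := by
    rw [← hAval, mul_comm, mul_div_assoc, div_self (pow_ne_zero _ hxane'), mul_one]
  have hB' : Bv = ((g cb : E) : ℂ) / ((xb : ℂ)) ^ hcard := by
    rw [← hBval, mul_comm, mul_div_assoc, div_self (pow_ne_zero _ hxbne'), mul_one]
  have hγval : γ = Gr * τ ^ hcard := by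
    rw [hγ, hA', hB', hGr, hτ]
    exact gamma_split _ _ _ _ _
  have hXh : X ^ hcard = ρ * γ ^ ℓ := by
    rw [hρ, div_mul_cancel₀ _ (pow_ne_zero _ hγne)]
  have hγℓ : γ ^ ℓ = (θE : ℂ) ^ hcard * Gr ^ (ℓ % hcard) := by
    have h12 := pow_split Gr τ hcard (ℓ / hcard) (ℓ % hcard)
    rw [Nat.div_add_mod] at h12
    rw [hγval, hθ]
    exact h12
  have hzT : (X / (θE : ℂ)) ^ (hcard * N.factorial) = Gr ^ ((ℓ % hcard) * N.factorial) := by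
    calc (X / (θE : ℂ)) ^ (hcard * N.factorial)
        = (X ^ hcard / (θE : ℂ) ^ hcard) ^ N.factorial := by rw [pow_mul, div_pow]
      _ = (ρ * Gr ^ (ℓ % hcard)) ^ N.factorial := by
          rw [hXh, hγℓ]
          congr 1
          rw [mul_comm ((θE : ℂ) ^ hcard) (Gr ^ (ℓ % hcard)), ← mul_assoc,
            mul_div_assoc, div_self (pow_ne_zero _ hθne), mul_one]
      _ = ρ ^ N.factorial * Gr ^ ((ℓ % hcard) * N.factorial) := by
          rw [mul_pow, ← pow_mul]
      _ = Gr ^ ((ℓ % hcard) * N.factorial) := by rw [hρN, one_mul]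
  have hzmem : (X / (θE : ℂ)) ∈ M := by
    have hmemT : (X / (θE : ℂ)) ∈ T := by
      rw [hT]
      simp only [Set.mem_iUnion]
      exact ⟨ca, cb, ⟨ℓ % hcard, Nat.mod_lt _ hcpos⟩, hzT⟩
    exact (le_sup_right : IntermediateField.adjoin ℚ T ≤ M)
      (IntermediateField.subset_adjoin ℚ T hmemT)
  have hθmem : (θE : ℂ) ∈ M := (le_sup_left : E ≤ M) (SetLike.coe_mem θE)
  have hfinal : X = (X / (θE : ℂ)) * (θE : ℂ) := (div_mul_cancel₀ X hθne).symm
  show X ∈ M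
  rw [hfinal]
  exact mul_mem hzmem hθmem
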